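/- arXiv:math/9612225 — 2 statements merged into one kernel-verified Lean document; each statement's English description precedes it below -/
import Mathlib

section
/- Let a be a complex number and k a natural number, and assume that (a−1) + m ≠ 0 and (1 − a − k) + m ≠ 0 for every natural number m < k (in particular a ≠ 1). Then ∑_{j=0}^{k} [(a)_j / ((a−1)_j · j!)] · [(a)_{k−j} / ((a−1)_{k−j} · (k−j)!)] = [(a+k−1) / ((a−1) · k!)] · ∑_{j=0}^{k} (a)_j (2−a−k)_j (−k)_j (−1)^j / ((a−1)_j (1−a−k)_j · j!), where (−k)_j denotes the Pochhammer symbol of the complex number −k. -/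
/-- Rising factorial (Pochhammer symbol) `(z)_n` over the complex numbers. -/
noncomputable def poch (z : ℂ) (n : ℕ) : ℂ := (ascPochhammer ℂ n).eval z

lemma poch_prod (z : ℂ) (n : ℕ) : poch z n = ∏ i ∈ Finset.range n, (z + i) := by
  induction n with
  | zero => simp [poch]
  | succ n ih => rw [poch, ascPochhammer_succ_eval, ← poch, ih, Finset.prod_range_succ]

lemma poch_split (z : ℂ) (m n : ℕ) : poch z (m + n) = poch z m * poch (z + m) n := by
  rw [poch_prod, poch_prod, poch_prod, Finset.prod_range_add]
  congr 1
  exact Finset.prod_congr rfl fun i _ => by push_cast; ring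

lemma poch_reflect (z : ℂ) (n : ℕ) : poch z n = (-1) ^ n * poch (1 - z - n) n := by
  rw [poch_prod, poch_prod, ← Finset.prod_range_reflect]
  rw [show ∏ j ∈ Finset.range n, (z + ↑(n - 1 - j)) =
      ∏ j ∈ Finset.range n, (-1) * (1 - z - n + j) from
    Finset.prod_congr rfl fun j hj => by
      rw [Finset.mem_range] at hj
      have : ((n - 1 - j : ℕ) : ℂ) = (n : ℂ) - 1 - j := by
        have : n - 1 - j = n - (1 + j) := by omega
        rw [this]; push_cast [Nat.cast_sub (by omega : 1 + j ≤ n)]; ring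
      rw [this]; ring]
  rw [Finset.prod_mul_distrib, Finset.prod_const, Finset.card_range]

lemma poch_one_eq_factorial (n : ℕ) : poch 1 n = n.factorial := by
  induction n with
  | zero => simp [poch]
  | succ n ih =>
      rw [poch, ascPochhammer_succ_eval, ← poch, ih]
      push_cast [Nat.factorial_succ]; ring

lemma poch_ne_zero (z : ℂ) (n : ℕ) (h : ∀ m : ℕ, m < n → z + m ≠ 0) : poch z n ≠ 0 := by
  rw [poch_prod]
  exact Finset.prod_ne_zero_iff.2 fun i hi => h i (Finset.mem_range.1 hi)

theorem tst : True := trivial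

lemma poch_one' (z : ℂ) : poch z 1 = z := by simp [poch_prod]

theorem stmt_11 (a : ℂ) (k : ℕ)
    (h1 : ∀ m : ℕ, m < k → a - 1 + (m : ℂ) ≠ 0)
    (h2 : ∀ m : ℕ, m < k → 1 - a - (k : ℂ) + (m : ℂ) ≠ 0)
    (ha : a ≠ 1) :
    ∑ j ∈ Finset.range (k + 1),
      (poch a j / (poch (a - 1) j * (j.factorial : ℂ))) *
        (poch a (k - j) / (poch (a - 1) (k - j) * ((k - j).factorial : ℂ)))
      = ((a + (k : ℂ) - 1) / ((a - 1) * (k.factorial : ℂ))) *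
          ∑ j ∈ Finset.range (k + 1),
            poch a j * poch (2 - a - (k : ℂ)) j * poch (-(k : ℂ)) j * (-1 : ℂ) ^ j /
              (poch (a - 1) j * poch (1 - a - (k : ℂ)) j * (j.factorial : ℂ)) := by
  rw [Finset.mul_sum]
  refine Finset.sum_congr rfl fun j hj => ?_
  have hjk : j ≤ k := Nat.lt_succ_iff.1 (Finset.mem_range.1 hj)
  have hc : ((k - j : ℕ) : ℂ) = (k : ℂ) - j := by
    push_cast [Nat.cast_sub hjk]; ring
  have ha' : a - 1 ≠ 0 := sub_ne_zero.2 ha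
  -- splits
  have e1 : (a - 1) * poch a k = poch (a - 1) k * (a + (k : ℂ) - 1) := by
    have h₁ := poch_split (a - 1) 1 k
    have h₂ := poch_split (a - 1) k 1
    rw [poch_one'] at h₁ h₂
    rw [show (1:ℕ) + k = k + 1 from Nat.add_comm 1 k] at h₁
    rw [h₂] at h₁
    push_cast at h₁ ⊢
    rw [show a - 1 + 1 = a by ring] at h₁
    linear_combination -h₁
  have e2 : poch a k = poch a (k - j) * ((-1 : ℂ) ^ j * poch (1 - a - (k : ℂ)) j) := by
    have h₁ := poch_split a (k - j) j
    rw [show k - j + j = k by omega] at h₁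
    rw [h₁, poch_reflect (a + ((k - j : ℕ) : ℂ)) j, hc]
    rw [show 1 - (a + ((k:ℂ) - j)) - j = 1 - a - k by ring]
  have e3 : poch (a - 1) k
      = poch (a - 1) (k - j) * ((-1 : ℂ) ^ j * poch (2 - a - (k : ℂ)) j) := by
    have h₁ := poch_split (a - 1) (k - j) j
    rw [show k - j + j = k by omega] at h₁
    rw [h₁, poch_reflect (a - 1 + ((k - j : ℕ) : ℂ)) j, hc]
    rw [show 1 - (a - 1 + ((k:ℂ) - j)) - j = 2 - a - k by ring]
  have e5 : (-1 : ℂ) ^ j * (-1 : ℂ) ^ j = 1 := by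
    rw [← pow_add]; exact (neg_one_pow_eq_one_iff_even (by norm_num)).2 ⟨j, rfl⟩
  have e4 : (k.factorial : ℂ)
      = ((k - j).factorial : ℂ) * ((-1 : ℂ) ^ j * poch (-(k : ℂ)) j) := by
    have h₁ := poch_split 1 (k - j) j
    rw [show k - j + j = k by omega, poch_one_eq_factorial, poch_one_eq_factorial] at h₁
    rw [h₁, hc, poch_reflect (-(k:ℂ)) j]
    rw [show 1 - -(k:ℂ) - j = 1 + ((k:ℂ) - j) by ring]
    generalize (-1:ℂ)^j = s at e5 ⊢
    linear_combination -(((k - j).factorial : ℂ) * poch (1 + ((k:ℂ) - j)) j) * e5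
  -- nonzeroness
  have hAj : poch (a - 1) j ≠ 0 :=
    poch_ne_zero _ _ fun m hm => h1 m (lt_of_lt_of_le hm hjk)
  have hAkj : poch (a - 1) (k - j) ≠ 0 :=
    poch_ne_zero _ _ fun m hm => h1 m (by omega)
  have hU : poch (1 - a - (k : ℂ)) j ≠ 0 :=
    poch_ne_zero _ _ fun m hm => h2 m (lt_of_lt_of_le hm hjk)
  have hFj : (j.factorial : ℂ) ≠ 0 := Nat.cast_ne_zero.2 j.factorial_ne_zero
  have hFkj : ((k - j).factorial : ℂ) ≠ 0 := Nat.cast_ne_zero.2 (k - j).factorial_ne_zero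
  have hFk : (k.factorial : ℂ) ≠ 0 := Nat.cast_ne_zero.2 k.factorial_ne_zero
  rw [div_mul_div_comm, div_mul_div_comm, div_eq_div_iff
    (mul_ne_zero (mul_ne_zero hAj hFj) (mul_ne_zero hAkj hFkj))
    (mul_ne_zero (mul_ne_zero ha' hFk) (mul_ne_zero (mul_ne_zero hAj hU) hFj))]
  set p := poch a (k - j)
  set q := poch (a - 1) (k - j)
  set u := poch (1 - a - (k : ℂ)) j
  set v := poch (2 - a - (k : ℂ)) j
  set w := poch (-(k : ℂ)) j
  set X := poch a j
  set Aj := poch (a - 1) j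
  set F := (k.factorial : ℂ)
  set G := ((k - j).factorial : ℂ)
  set J := (j.factorial : ℂ)
  generalize hs : (-1 : ℂ) ^ j = s at e2 e3 e4 e5 ⊢
  linear_combination (X * Aj * J) * ((p * (a - 1) * u) * e4
    + G * w * s * (s * e1 - (a - 1) * s * e2 + (a + (k:ℂ) - 1) * s * e3
      + ((a + (k:ℂ) - 1) * v * q - p * (a - 1) * u) * e5))
end

section
/- Let a be a complex number such that (a−3) + m ≠ 0 for every natural number m. Define, for each natural number k, T(k) = ∑_{j=0}^{k} [(a)_j / ((a−3)_j · j!)] · [(a)_{k−j} / ((a−3)_{k−j} · (k−j)!)]. Then for every natural number k, −(k+1) · (−264k⁴a − 8448a − 5136k + 289k⁴ + 6180a²k² + 2180ak³ − 9216a³ − 2016a³k² − 1032a²k³ + 7808a³k + 3712a⁴ − 27k⁵ + 2304 + 12k⁵a + k⁶ − 1968a⁴k − 768a⁵ + 13984ak + 4102k² + 192a⁵k + 240a⁴k² + 160a³k³ + 60k⁴a² − 15000a²k + 12352a² − 8232ak² − 1533k³ + 64a⁶) · T(k+1) + 2 · (−204k⁴a − 768a − 504k + 169k⁴ + 3444a²k²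 + 1244ak³ − 3264a³ − 1536a³k² − 792a²k³ + 4256a³k + 1984a⁴ − 21k⁵ + 12k⁵a + k⁶ − 1488a⁴k − 576a⁵ + 3064ak + 982k² + 192a⁵k + 240a⁴k² + 160a³k³ + 60k⁴a² − 5496a²k + 2560a² − 3156ak² − 627k³ + 64a⁶) · T(k) = 0. (The sextic polynomial coefficients in k have no proper factorization over ℚ.) -/
set_option maxHeartbeats 4000000

noncomputable def Gg (a x : ℂ) : ℂ := (a + x - 1) * (a + x - 2) * (a + x - 3)

noncomputable def Pp (a x : ℂ) : ℂ :=
  -264 * x ^ 4 * a - 8448 * a - 5136 * x + 289 * x ^ 4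
    + 6180 * a ^ 2 * x ^ 2 + 2180 * a * x ^ 3 - 9216 * a ^ 3
    - 2016 * a ^ 3 * x ^ 2 - 1032 * a ^ 2 * x ^ 3
    + 7808 * a ^ 3 * x + 3712 * a ^ 4 - 27 * x ^ 5 + 2304
    + 12 * x ^ 5 * a + x ^ 6 - 1968 * a ^ 4 * x - 768 * a ^ 5
    + 13984 * a * x + 4102 * x ^ 2 + 192 * a ^ 5 * x
    + 240 * a ^ 4 * x ^ 2 + 160 * a ^ 3 * x ^ 3
    + 60 * x ^ 4 * a ^ 2 - 15000 * a ^ 2 * x + 12352 * a ^ 2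
    - 8232 * a * x ^ 2 - 1533 * x ^ 3 + 64 * a ^ 6

lemma poch_zero (z : ℂ) : poch z 0 = 1 := by simp [poch]

lemma poch_succ (z : ℂ) (n : ℕ) : poch z (n + 1) = poch z n * (z + n) := by
  simp [poch, ascPochhammer_succ_right, Polynomial.eval_mul]

lemma poch_ne (a : ℂ) (ha : ∀ m : ℕ, a - 3 + (m : ℂ) ≠ 0) :
    ∀ j : ℕ, poch (a - 3) j ≠ 0 := by
  intro j
  induction j with
  | zero => simp [poch_zero]
  | succ n ih =>
    rw [poch_succ]
    exact mul_ne_zero ih (ha n)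

lemma ratio (a : ℂ) : ∀ j : ℕ,
    (a - 1) * (a - 2) * (a - 3) * poch a j = poch (a - 3) j * Gg a j := by
  intro j
  induction j with
  | zero => simp only [poch_zero, Gg]; push_cast; ring
  | succ n ih =>
    rw [poch_succ, poch_succ]
    simp only [Gg] at ih ⊢
    push_cast
    linear_combination (a + n) * ih

lemma bstep (f : ℕ → ℂ) (k : ℕ) :
    ∑ j ∈ Finset.range (k + 1 + 1), (((k + 1).choose j : ℕ) : ℂ) * f j =
      ∑ j ∈ Finset.range (k + 1), ((k.choose j : ℕ) : ℂ) * f j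
      + ∑ j ∈ Finset.range (k + 1), ((k.choose j : ℕ) : ℂ) * f (j + 1) := by
  rw [Finset.sum_range_succ' (fun j => (((k + 1).choose j : ℕ) : ℂ) * f j) (k + 1)]
  have h2 : ∑ j ∈ Finset.range (k + 1), (((k + 1).choose (j + 1) : ℕ) : ℂ) * f (j + 1)
      = ∑ j ∈ Finset.range (k + 1),
          (((k.choose (j + 1) : ℕ) : ℂ) * f (j + 1) + ((k.choose j : ℕ) : ℂ) * f (j + 1)) := by
    refine Finset.sum_congr rfl fun j _ => ?_
    rw [Nat.choose_succ_succ]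
    push_cast; ring
  rw [h2, Finset.sum_add_distrib]
  have h3 : (∑ j ∈ Finset.range (k + 1), ((k.choose (j + 1) : ℕ) : ℂ) * f (j + 1))
        + ((k.choose 0 : ℕ) : ℂ) * f 0
      = ∑ j ∈ Finset.range (k + 1), ((k.choose j : ℕ) : ℂ) * f j := by
    rw [← Finset.sum_range_succ' (fun j => ((k.choose j : ℕ) : ℂ) * f j) (k + 1),
      Finset.sum_range_succ, Nat.choose_succ_self]
    simp
  simp only [Nat.choose_zero_right, Nat.cast_one] at h3 ⊢
  linear_combination h3

lemma S0 (k : ℕ) : ∑ j ∈ Finset.range (k + 1), ((k.choose j : ℕ) : ℂ) = 2 ^ k := by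
  exact_mod_cast congrArg (Nat.cast (R := ℂ)) (Nat.sum_range_choose k)

lemma S1 (k : ℕ) : ∑ j ∈ Finset.range (k + 1), ((k.choose j : ℕ) : ℂ) * (j : ℂ)
    = 2 ^ k * (k : ℂ) / 2 := by
  induction k with
  | zero => simp
  | succ k ih =>
    rw [show (∑ j ∈ Finset.range (k + 1 + 1), (((k + 1).choose j : ℕ) : ℂ) * (j : ℂ)) =
      _ from bstep (fun j => ((j : ℕ) : ℂ)) k]
    have e : ∀ j ∈ Finset.range (k + 1), ((k.choose j : ℕ) : ℂ) * (((j + 1 : ℕ)) : ℂ)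
        = ((k.choose j : ℕ) : ℂ) * (j : ℂ) + ((k.choose j : ℕ) : ℂ) := by
      intro j _; push_cast; ring
    rw [Finset.sum_congr rfl e, Finset.sum_add_distrib, ih, S0 k]
    push_cast; ring

lemma S2 (k : ℕ) : ∑ j ∈ Finset.range (k + 1), ((k.choose j : ℕ) : ℂ) * (j : ℂ) ^ 2
    = 2 ^ k * ((k : ℂ) ^ 2 + (k : ℂ)) / 4 := by
  induction k with
  | zero => simp
  | succ k ih =>
    rw [show (∑ j ∈ Finset.range (k + 1 + 1), (((k + 1).choose j : ℕ) : ℂ) * (j : ℂ) ^ 2) =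
      _ from bstep (fun j => ((j : ℕ) : ℂ) ^ 2) k]
    have e : ∀ j ∈ Finset.range (k + 1), ((k.choose j : ℕ) : ℂ) * (((j + 1 : ℕ)) : ℂ) ^ 2
        = ((k.choose j : ℕ) : ℂ) * (j : ℂ) ^ 2
          + 2 * (((k.choose j : ℕ) : ℂ) * (j : ℂ)) + ((k.choose j : ℕ) : ℂ) := by
      intro j _; push_cast; ring
    rw [Finset.sum_congr rfl e]
    simp only [Finset.sum_add_distrib, ← Finset.mul_sum]
    rw [ih, S1 k, S0 k]
    push_cast; ring

lemma S3 (k : ℕ) : ∑ j ∈ Finset.range (k + 1), ((k.choose j : ℕ) : ℂ) * (j : ℂ) ^ 3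
    = 2 ^ k * ((k : ℂ) ^ 3 + 3 * (k : ℂ) ^ 2) / 8 := by
  induction k with
  | zero => simp
  | succ k ih =>
    rw [show (∑ j ∈ Finset.range (k + 1 + 1), (((k + 1).choose j : ℕ) : ℂ) * (j : ℂ) ^ 3) =
      _ from bstep (fun j => ((j : ℕ) : ℂ) ^ 3) k]
    have e : ∀ j ∈ Finset.range (k + 1), ((k.choose j : ℕ) : ℂ) * (((j + 1 : ℕ)) : ℂ) ^ 3
        = ((k.choose j : ℕ) : ℂ) * (j : ℂ) ^ 3
          + 3 * (((k.choose j : ℕ) : ℂ) * (j : ℂ) ^ 2)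
          + 3 * (((k.choose j : ℕ) : ℂ) * (j : ℂ)) + ((k.choose j : ℕ) : ℂ) := by
      intro j _; push_cast; ring
    rw [Finset.sum_congr rfl e]
    simp only [Finset.sum_add_distrib, ← Finset.mul_sum]
    rw [ih, S2 k, S1 k, S0 k]
    push_cast; ring

lemma S4 (k : ℕ) : ∑ j ∈ Finset.range (k + 1), ((k.choose j : ℕ) : ℂ) * (j : ℂ) ^ 4
    = 2 ^ k * ((k : ℂ) ^ 4 + 6 * (k : ℂ) ^ 3 + 3 * (k : ℂ) ^ 2 - 2 * (k : ℂ)) / 16 := by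
  induction k with
  | zero => simp
  | succ k ih =>
    rw [show (∑ j ∈ Finset.range (k + 1 + 1), (((k + 1).choose j : ℕ) : ℂ) * (j : ℂ) ^ 4) =
      _ from bstep (fun j => ((j : ℕ) : ℂ) ^ 4) k]
    have e : ∀ j ∈ Finset.range (k + 1), ((k.choose j : ℕ) : ℂ) * (((j + 1 : ℕ)) : ℂ) ^ 4
        = ((k.choose j : ℕ) : ℂ) * (j : ℂ) ^ 4
          + 4 * (((k.choose j : ℕ) : ℂ) * (j : ℂ) ^ 3)
          + 6 * (((k.choose j : ℕ) : ℂ) * (j : ℂ) ^ 2)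
          + 4 * (((k.choose j : ℕ) : ℂ) * (j : ℂ)) + ((k.choose j : ℕ) : ℂ) := by
      intro j _; push_cast; ring
    rw [Finset.sum_congr rfl e]
    simp only [Finset.sum_add_distrib, ← Finset.mul_sum]
    rw [ih, S3 k, S2 k, S1 k, S0 k]
    push_cast; ring

lemma S5 (k : ℕ) : ∑ j ∈ Finset.range (k + 1), ((k.choose j : ℕ) : ℂ) * (j : ℂ) ^ 5
    = 2 ^ k * ((k : ℂ) ^ 5 + 10 * (k : ℂ) ^ 4 + 15 * (k : ℂ) ^ 3 - 10 * (k : ℂ) ^ 2) / 32 := by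
  induction k with
  | zero => simp
  | succ k ih =>
    rw [show (∑ j ∈ Finset.range (k + 1 + 1), (((k + 1).choose j : ℕ) : ℂ) * (j : ℂ) ^ 5) =
      _ from bstep (fun j => ((j : ℕ) : ℂ) ^ 5) k]
    have e : ∀ j ∈ Finset.range (k + 1), ((k.choose j : ℕ) : ℂ) * (((j + 1 : ℕ)) : ℂ) ^ 5
        = ((k.choose j : ℕ) : ℂ) * (j : ℂ) ^ 5
          + 5 * (((k.choose j : ℕ) : ℂ) * (j : ℂ) ^ 4)
          + 10 * (((k.choose j : ℕ) : ℂ) * (j : ℂ) ^ 3)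
          + 10 * (((k.choose j : ℕ) : ℂ) * (j : ℂ) ^ 2)
          + 5 * (((k.choose j : ℕ) : ℂ) * (j : ℂ)) + ((k.choose j : ℕ) : ℂ) := by
      intro j _; push_cast; ring
    rw [Finset.sum_congr rfl e]
    simp only [Finset.sum_add_distrib, ← Finset.mul_sum]
    rw [ih, S4 k, S3 k, S2 k, S1 k, S0 k]
    push_cast; ring

lemma S6 (k : ℕ) : ∑ j ∈ Finset.range (k + 1), ((k.choose j : ℕ) : ℂ) * (j : ℂ) ^ 6
    = 2 ^ k * ((k : ℂ) ^ 6 + 15 * (k : ℂ) ^ 5 + 45 * (k : ℂ) ^ 4 - 15 * (k : ℂ) ^ 3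
        - 30 * (k : ℂ) ^ 2 + 16 * (k : ℂ)) / 64 := by
  induction k with
  | zero => simp
  | succ k ih =>
    rw [show (∑ j ∈ Finset.range (k + 1 + 1), (((k + 1).choose j : ℕ) : ℂ) * (j : ℂ) ^ 6) =
      _ from bstep (fun j => ((j : ℕ) : ℂ) ^ 6) k]
    have e : ∀ j ∈ Finset.range (k + 1), ((k.choose j : ℕ) : ℂ) * (((j + 1 : ℕ)) : ℂ) ^ 6
        = ((k.choose j : ℕ) : ℂ) * (j : ℂ) ^ 6
          + 6 * (((k.choose j : ℕ) : ℂ) * (j : ℂ) ^ 5)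
          + 15 * (((k.choose j : ℕ) : ℂ) * (j : ℂ) ^ 4)
          + 20 * (((k.choose j : ℕ) : ℂ) * (j : ℂ) ^ 3)
          + 15 * (((k.choose j : ℕ) : ℂ) * (j : ℂ) ^ 2)
          + 6 * (((k.choose j : ℕ) : ℂ) * (j : ℂ)) + ((k.choose j : ℕ) : ℂ) := by
      intro j _; push_cast; ring
    rw [Finset.sum_congr rfl e]
    simp only [Finset.sum_add_distrib, ← Finset.mul_sum]
    rw [ih, S5 k, S4 k, S3 k, S2 k, S1 k, S0 k]
    push_cast; ring

lemma keysum (a : ℂ) (k : ℕ) :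
    ∑ j ∈ Finset.range (k + 1), ((k.choose j : ℕ) : ℂ) * (Gg a j * Gg a ((k - j : ℕ) : ℂ))
      = 2 ^ k * Pp a k / 64 := by
  have e : ∀ j ∈ Finset.range (k + 1),
      ((k.choose j : ℕ) : ℂ) * (Gg a j * Gg a ((k - j : ℕ) : ℂ))
      = (36 - 66 * (k:ℂ) + 36 * (k:ℂ)^2 - 6 * (k:ℂ)^3 - 132 * a + 193 * a * (k:ℂ)
          - 84 * a * (k:ℂ)^2 + 11 * a * (k:ℂ)^3 + 193 * a^2 - 216 * a^2 * (k:ℂ)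
          + 69 * a^2 * (k:ℂ)^2 - 6 * a^2 * (k:ℂ)^3 - 144 * a^3 + 116 * a^3 * (k:ℂ)
          - 24 * a^3 * (k:ℂ)^2 + a^3 * (k:ℂ)^3 + 58 * a^4 - 30 * a^4 * (k:ℂ)
          + 3 * a^4 * (k:ℂ)^2 - 12 * a^5 + 3 * a^5 * (k:ℂ) + a^6)
          * ((k.choose j : ℕ) : ℂ)
        + (49 * (k:ℂ) - 48 * (k:ℂ)^2 + 11 * (k:ℂ)^3 - 96 * a * (k:ℂ) + 72 * a * (k:ℂ)^2
          - 12 * a * (k:ℂ)^3 + 72 * a^2 * (k:ℂ) - 36 * a^2 * (k:ℂ)^2 + 3 * a^2 * (k:ℂ)^3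
          - 24 * a^3 * (k:ℂ) + 6 * a^3 * (k:ℂ)^2 + 3 * a^4 * (k:ℂ))
          * (((k.choose j : ℕ) : ℂ) * (j : ℂ))
        + (-49 + 48 * (k:ℂ) + 3 * (k:ℂ)^2 - 6 * (k:ℂ)^3 + 96 * a - 72 * a * (k:ℂ)
          + 3 * a * (k:ℂ)^3 - 72 * a^2 + 36 * a^2 * (k:ℂ) + 24 * a^3 - 6 * a^3 * (k:ℂ)
          - 3 * a^4) * (((k.choose j : ℕ) : ℂ) * (j : ℂ) ^ 2)
        + (-28 * (k:ℂ) + 12 * (k:ℂ)^2 + (k:ℂ)^3 + 24 * a * (k:ℂ) - 6 * a * (k:ℂ)^2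
          - 6 * a^2 * (k:ℂ)) * (((k.choose j : ℕ) : ℂ) * (j : ℂ) ^ 3)
        + (14 - 6 * (k:ℂ) - 3 * (k:ℂ)^2 - 12 * a + 3 * a * (k:ℂ) + 3 * a^2)
          * (((k.choose j : ℕ) : ℂ) * (j : ℂ) ^ 4)
        + (3 * (k:ℂ)) * (((k.choose j : ℕ) : ℂ) * (j : ℂ) ^ 5)
        + (-1) * (((k.choose j : ℕ) : ℂ) * (j : ℂ) ^ 6) := by
    intro j hj
    have hle : j ≤ k := Nat.lt_succ_iff.mp (Finset.mem_range.mp hj)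
    have hc : ((k - j : ℕ) : ℂ) = (k : ℂ) - (j : ℂ) := by push_cast [hle]; ring
    rw [hc]
    simp only [Gg]
    ring
  rw [Finset.sum_congr rfl e]
  simp only [Finset.sum_add_distrib, ← Finset.mul_sum]
  rw [S6 k, S5 k, S4 k, S3 k, S2 k, S1 k, S0 k]
  simp only [Pp]
  ring

lemma Tval (a : ℂ) (ha : ∀ m : ℕ, a - 3 + (m : ℂ) ≠ 0)
    (T : ℕ → ℂ)
    (hT : ∀ k : ℕ, T k = ∑ j ∈ Finset.range (k + 1),
      (poch a j / (poch (a - 3) j * (j.factorial : ℂ))) *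
        (poch a (k - j) / (poch (a - 3) (k - j) * ((k - j).factorial : ℂ))))
    (k : ℕ) :
    T k = 2 ^ k * Pp a k /
      (64 * ((a - 1) * (a - 2) * (a - 3)) ^ 2 * (k.factorial : ℂ)) := by
  have h1 : a - 1 ≠ 0 := by
    have := ha 2; push_cast at this
    intro h; apply this; linear_combination h
  have h2 : a - 2 ≠ 0 := by
    have := ha 1; push_cast at this
    intro h; apply this; linear_combination h
  have h3 : a - 3 ≠ 0 := by
    have := ha 0; push_cast at this
    intro h; apply this; linear_combination h
  have hD : (a - 1) * (a - 2) * (a - 3) ≠ 0 := mul_ne_zero (mul_ne_zero h1 h2) h3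
  have hA : ∀ j : ℕ, poch a j / (poch (a - 3) j * (j.factorial : ℂ))
      = Gg a j / ((a - 1) * (a - 2) * (a - 3) * (j.factorial : ℂ)) := by
    intro j
    have n1 := poch_ne a ha j
    have f1 : (j.factorial : ℂ) ≠ 0 := by exact_mod_cast j.factorial_ne_zero
    rw [div_eq_div_iff (mul_ne_zero n1 f1) (mul_ne_zero hD f1)]
    linear_combination (j.factorial : ℂ) * ratio a j
  rw [hT k]
  have hterm : ∀ j ∈ Finset.range (k + 1),
      (poch a j / (poch (a - 3) j * (j.factorial : ℂ))) *
        (poch a (k - j) / (poch (a - 3) (k - j) * ((k - j).factorial : ℂ)))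
      = ((k.choose j : ℕ) : ℂ) * (Gg a j * Gg a ((k - j : ℕ) : ℂ)) /
          (((a - 1) * (a - 2) * (a - 3)) ^ 2 * (k.factorial : ℂ)) := by
    intro j hj
    have hle : j ≤ k := Nat.lt_succ_iff.mp (Finset.mem_range.mp hj)
    have f1 : (j.factorial : ℂ) ≠ 0 := by exact_mod_cast j.factorial_ne_zero
    have f2 : ((k - j).factorial : ℂ) ≠ 0 := by exact_mod_cast (k - j).factorial_ne_zero
    have fk : (k.factorial : ℂ) ≠ 0 := by exact_mod_cast k.factorial_ne_zero
    have hcf : ((k.choose j : ℕ) : ℂ) * (j.factorial : ℂ) * ((k - j).factorial : ℂ)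
        = (k.factorial : ℂ) := by
      exact_mod_cast congrArg (Nat.cast (R := ℂ)) (Nat.choose_mul_factorial_mul_factorial hle)
    rw [hA j, hA (k - j), div_mul_div_comm]
    rw [div_eq_div_iff
      (mul_ne_zero (mul_ne_zero hD f1) (mul_ne_zero hD f2))
      (mul_ne_zero (pow_ne_zero 2 hD) fk)]
    linear_combination
      (-(Gg a j * Gg a ((k - j : ℕ) : ℂ)) * ((a - 1) * (a - 2) * (a - 3)) ^ 2) * hcf
  rw [Finset.sum_congr rfl hterm, ← Finset.sum_div, keysum a k, div_div]
  ring

theorem stmt_14 (a : ℂ) (ha : ∀ m : ℕ, a - 3 + (m : ℂ) ≠ 0)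
    (T : ℕ → ℂ)
    (hT : ∀ k : ℕ, T k = ∑ j ∈ Finset.range (k + 1),
      (poch a j / (poch (a - 3) j * (j.factorial : ℂ))) *
        (poch a (k - j) / (poch (a - 3) (k - j) * ((k - j).factorial : ℂ)))) :
    ∀ k : ℕ,
      -(((k : ℂ) + 1) *
          (-264 * (k : ℂ) ^ 4 * a - 8448 * a - 5136 * (k : ℂ) + 289 * (k : ℂ) ^ 4
            + 6180 * a ^ 2 * (k : ℂ) ^ 2 + 2180 * a * (k : ℂ) ^ 3 - 9216 * a ^ 3
            - 2016 * a ^ 3 * (k : ℂ) ^ 2 - 1032 * a ^ 2 * (k : ℂ) ^ 3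
            + 7808 * a ^ 3 * (k : ℂ) + 3712 * a ^ 4 - 27 * (k : ℂ) ^ 5 + 2304
            + 12 * (k : ℂ) ^ 5 * a + (k : ℂ) ^ 6 - 1968 * a ^ 4 * (k : ℂ) - 768 * a ^ 5
            + 13984 * a * (k : ℂ) + 4102 * (k : ℂ) ^ 2 + 192 * a ^ 5 * (k : ℂ)
            + 240 * a ^ 4 * (k : ℂ) ^ 2 + 160 * a ^ 3 * (k : ℂ) ^ 3
            + 60 * (k : ℂ) ^ 4 * a ^ 2 - 15000 * a ^ 2 * (k : ℂ) + 12352 * a ^ 2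
            - 8232 * a * (k : ℂ) ^ 2 - 1533 * (k : ℂ) ^ 3 + 64 * a ^ 6)) * T (k + 1)
      + 2 *
          (-204 * (k : ℂ) ^ 4 * a - 768 * a - 504 * (k : ℂ) + 169 * (k : ℂ) ^ 4
            + 3444 * a ^ 2 * (k : ℂ) ^ 2 + 1244 * a * (k : ℂ) ^ 3 - 3264 * a ^ 3
            - 1536 * a ^ 3 * (k : ℂ) ^ 2 - 792 * a ^ 2 * (k : ℂ) ^ 3
            + 4256 * a ^ 3 * (k : ℂ) + 1984 * a ^ 4 - 21 * (k : ℂ) ^ 5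
            + 12 * (k : ℂ) ^ 5 * a + (k : ℂ) ^ 6 - 1488 * a ^ 4 * (k : ℂ) - 576 * a ^ 5
            + 3064 * a * (k : ℂ) + 982 * (k : ℂ) ^ 2 + 192 * a ^ 5 * (k : ℂ)
            + 240 * a ^ 4 * (k : ℂ) ^ 2 + 160 * a ^ 3 * (k : ℂ) ^ 3
            + 60 * (k : ℂ) ^ 4 * a ^ 2 - 5496 * a ^ 2 * (k : ℂ) + 2560 * a ^ 2
            - 3156 * a * (k : ℂ) ^ 2 - 627 * (k : ℂ) ^ 3 + 64 * a ^ 6) * T k = 0 := by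
  intro k
  have h1 : a - 1 ≠ 0 := by
    have := ha 2; push_cast at this
    intro h; apply this; linear_combination h
  have h2 : a - 2 ≠ 0 := by
    have := ha 1; push_cast at this
    intro h; apply this; linear_combination h
  have h3 : a - 3 ≠ 0 := by
    have := ha 0; push_cast at this
    intro h; apply this; linear_combination h
  have hD : (a - 1) * (a - 2) * (a - 3) ≠ 0 := mul_ne_zero (mul_ne_zero h1 h2) h3
  have fk : (k.factorial : ℂ) ≠ 0 := by exact_mod_cast k.factorial_ne_zero
  have hk1 : ((k : ℂ) + 1) ≠ 0 := by
    exact Nat.cast_add_one_ne_zero k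
  have hfs : (((k + 1).factorial : ℕ) : ℂ) = ((k : ℂ) + 1) * (k.factorial : ℂ) := by
    rw [Nat.factorial_succ]; push_cast; ring
  rw [Tval a ha T hT k, Tval a ha T hT (k + 1), hfs]
  have hcast : (((k + 1 : ℕ)) : ℂ) = (k : ℂ) + 1 := by push_cast; ring
  rw [hcast]
  simp only [Pp]
  field_simp
  ring
end
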